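/- arXiv:2011.07625 — 7 statements merged into one kernel-verified Lean document; each statement's English description precedes it below -/
import Mathlib

section
/- For every nonnegative integer s ≥ 1, the alternating sum ∑_{i=0}^{s} (-1)^i · C_i · binomial(i+1, s-i) = 0, where C_i = binomial(2i, i)/(i+1) is the i-th Catalan number. -/
/-!
Gosper's algorithm applied to the summand `a i = (-1)^i C_i binom(i+1, s-i)` produces the
certificate `G i = (2i-s)(2i-s+1) (-1)^(i+1) C_i binom(i+1, s-i)` with
`s(s+1) a i = G (i+1) - G i` for `i < s`; after clearing denominators this only uses
`(i+2) C_(i+1) = 2(2i+1) C_i` and the ratios of neighbouring binomial coefficients.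
Hence `s(s+1) ∑ a i = G s - G 0 + s(s+1) a s`, which vanishes because `G 0 = 0` and
`G s = -s(s+1) a s` for `s ≥ 1`.
-/

open Finset

theorem succ_succ_mul_catalan_succ (n : ℕ) :
    (n + 2) * catalan (n + 1) = 2 * (2 * n + 1) * catalan n := by
  have h : (n + 1) * ((n + 2) * catalan (n + 1)) = (n + 1) * (2 * (2 * n + 1) * catalan n) := by
    calc (n + 1) * ((n + 2) * catalan (n + 1))
        = (n + 1) * (n + 1).centralBinom := by rw [← succ_mul_catalan_eq_centralBinom]
      _ = 2 * (2 * n + 1) * n.centralBinom := Nat.succ_mul_centralBinom_succ n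
      _ = (n + 1) * (2 * (2 * n + 1) * catalan n) := by
        rw [← succ_mul_catalan_eq_centralBinom]; ring
  exact Nat.eq_of_mul_eq_mul_left n.succ_pos h

theorem intCast_choose_mul_sub (n k : ℕ) :
    (n.choose k : ℤ) * (n - k) = n.choose (k + 1) * (k + 1) := by
  rcases le_or_gt k n with hk | hk
  · have h := Nat.choose_succ_right_eq n k
    rw [← Nat.cast_sub hk]
    exact_mod_cast h.symm
  · simp [Nat.choose_eq_zero_of_lt hk, Nat.choose_eq_zero_of_lt (hk.trans k.lt_succ_self)]

theorem sub_mul_sub_mul_choose_succ (n k : ℕ) :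
    ((n : ℤ) - k) * (n + 1 - k) * (n + 1).choose k = (n + 1) * (k + 1) * n.choose (k + 1) := by
  have h₁ := intCast_choose_mul_sub (n + 1) k
  have h₂ := intCast_choose_mul_sub n k
  have h₃ : ((n + 1).choose (k + 1) : ℤ) * (k + 1) = (n + 1) * n.choose k := by
    exact_mod_cast (Nat.add_one_mul_choose_eq n k).symm
  push_cast at h₁
  linear_combination ((n : ℤ) - k) * (h₁.trans h₃) + (n + 1) * h₂

def gosperCertificate (s j : ℕ) : ℤ :=
  ((2 * j : ℤ) - s) * (2 * j - s + 1) * (-1) ^ (j + 1) * catalan j * (j + 1).choose (s - j)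

theorem mul_catalan_choose_eq_gosperCertificate_sub {s i : ℕ} (hi : i < s) :
    ((s : ℤ) * (s + 1)) * ((-1) ^ i * catalan i * (i + 1).choose (s - i)) =
      gosperCertificate s (i + 1) - gosperCertificate s i := by
  obtain ⟨k, rfl⟩ := Nat.exists_eq_add_of_lt hi
  have hbinom := sub_mul_sub_mul_choose_succ (i + 1) k
  have hcat : ((i : ℤ) + 2) * catalan (i + 1) = 2 * (2 * i + 1) * catalan i := by
    exact_mod_cast succ_succ_mul_catalan_succ i
  have hsub₁ : i + k + 1 - i = k + 1 := by omega
  have hsub₂ : i + k + 1 - (i + 1) = k := by omega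
  simp only [gosperCertificate, hsub₁, hsub₂]
  push_cast at hbinom ⊢
  linear_combination (-(-1 : ℤ) ^ i * catalan (i + 1)) * hbinom
    + (-(-1 : ℤ) ^ i * (k + 1) * ((i + 1).choose (k + 1) : ℤ)) * hcat

theorem gosperCertificate_zero {s : ℕ} (hs : 1 ≤ s) : gosperCertificate s 0 = 0 := by
  rcases hs.eq_or_lt with rfl | hs
  · simp [gosperCertificate]
  · simp [gosperCertificate, Nat.choose_eq_zero_of_lt hs]

theorem gosperCertificate_self (s : ℕ) :
    gosperCertificate s s = -((s : ℤ) * (s + 1)) * ((-1) ^ s * catalan s) := by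
  simp only [gosperCertificate, Nat.sub_self, Nat.choose_zero_right]
  push_cast
  ring

theorem catalan_alternating_sum (s : ℕ) (hs : 1 ≤ s) :
    ∑ i ∈ Finset.range (s + 1),
      (-1 : ℤ) ^ i * catalan i * (i + 1).choose (s - i) = 0 := by
  have htelescope : ((s : ℤ) * (s + 1)) * ∑ i ∈ range s,
      (-1 : ℤ) ^ i * catalan i * (i + 1).choose (s - i) =
        gosperCertificate s s - gosperCertificate s 0 := by
    rw [mul_sum, ← sum_range_sub]
    exact sum_congr rfl fun i hi => mul_catalan_choose_eq_gosperCertificate_sub (mem_range.mp hi)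
  have hmul : ((s : ℤ) * (s + 1)) * ∑ i ∈ range (s + 1),
      (-1 : ℤ) ^ i * catalan i * (i + 1).choose (s - i) = 0 := by
    rw [sum_range_succ, mul_add, htelescope, gosperCertificate_zero hs, gosperCertificate_self,
      Nat.sub_self, Nat.choose_zero_right]
    push_cast
    ring
  have hpos : (0 : ℤ) < s := by exact_mod_cast hs
  exact (mul_eq_zero.mp hmul).resolve_left (by positivity)
end

section
/- For integers l ≥ m ≥ 1, the sum over all t ≥ 1 and all compositions (m_1, ..., m_t) of m with each m_j ≥ 1, of (-1)^t · binomial(l - m_1, m_1 - 1) · ∏_{j=2}^{t} binomial(l - m_j, m_j), equals (-1)^m · C_{m-1}, where C_{m-1} is the (m-1)-st Catalan number. -/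
/-!
Let `F n` (`fibPoly`) be the Fibonacci polynomials, `F 0 = 0`, `F 1 = 1`,
`F (n + 2) = F (n + 1) + X F n`, so that `F (n + 1) = ∑ b, (n - b).choose b X ^ b`.
Signed sums over compositions of products of block weights `a` are the coefficients of
`(∑ a j X ^ j)⁻¹`. The block weights `(l - b).choose b` are the coefficients of `F (l + 1)` and
the first-block weights `(l - b).choose (b - 1)` those of `X F l`, so the sum of the theorem is
`-[X ^ (m - 1)] F l / F (l + 1)`. The series `C = ∑ (-1) ^ n catalan n X ^ n` satisfies
`C + X C ^ 2 = 1`, which gives `C F (n + 2) - F (n + 1) = -X C (C F (n + 1) - F n)`; hence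
`X ^ n ∣ C F (n + 1) - F n`, i.e. `F l / F (l + 1)` agrees with `C` up to degree `l - 1`.
-/

open Finset PowerSeries

namespace Composition

variable {n : ℕ}

theorem heq_of_blocks_eq {m : ℕ} {c : Composition m} {c' : Composition n}
    (h : c.blocks = c'.blocks) : c ≍ c' :=
  (Sigma.mk.inj_iff.1 (sigma_eq_iff_blocks_eq (c := ⟨m, c⟩) (c' := ⟨n, c'⟩) |>.2 h)).2

theorem headI_cons_tail (c : Composition (n + 1)) :
    c.blocks.headI :: c.blocks.tail = c.blocks := by
  cases h : c.blocks with
  | nil => exact absurd ((c.blocks_eq_nil).1 h) n.succ_ne_zero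
  | cons b bs => rfl

theorem headI_pos (c : Composition (n + 1)) : 0 < c.blocks.headI :=
  c.blocks_pos (c.headI_cons_tail ▸ List.mem_cons_self)

/-- A composition of `n + 1` is a first block `k + 1` followed by a composition of `n - k`. -/
def consEquiv (n : ℕ) : (Σ k : Fin (n + 1), Composition (n - k)) ≃ Composition (n + 1) where
  toFun p :=
    { blocks := (p.1 + 1) :: p.2.blocks
      blocks_pos := by
        rintro i (_ | ⟨_, hi⟩)
        exacts [Nat.succ_pos _, p.2.blocks_pos hi]
      blocks_sum := by rw [List.sum_cons, p.2.blocks_sum]; omega }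
  invFun c :=
    ⟨⟨c.blocks.headI - 1, by
        have := List.headI_le_sum c.blocks
        rw [c.blocks_sum] at this
        omega⟩,
      { blocks := c.blocks.tail
        blocks_pos := fun hi => c.blocks_pos (List.mem_of_mem_tail hi)
        blocks_sum := by
          have := List.headI_add_tail_sum c.blocks
          have := c.headI_pos
          rw [c.blocks_sum] at *
          simp only
          omega }⟩
  left_inv p := Sigma.ext (Fin.ext (by simp)) (heq_of_blocks_eq rfl)
  right_inv c := Composition.ext <| by
    simp only [Nat.sub_add_cancel c.headI_pos, c.headI_cons_tail]

theorem sum_succ_eq_sum_antidiagonal {M : Type*} [AddCommMonoid M] (f : List ℕ → M) :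
    ∑ c : Composition (n + 1), f c.blocks =
      ∑ p ∈ antidiagonal n, ∑ c : Composition p.2, f ((p.1 + 1) :: c.blocks) := by
  rw [← (consEquiv n).sum_comp, Fintype.sum_sigma, Nat.sum_antidiagonal_eq_sum_range_succ_mk,
    ← Fin.sum_univ_eq_sum_range (fun k => ∑ c : Composition (n - k), f ((k + 1) :: c.blocks))]
  rfl

end Composition

section AltCompositionSum

variable {R : Type*} [CommRing R]

def altCompositionSum (a : ℕ → R) (n : ℕ) : R :=
  ∑ c : Composition n, (-1) ^ c.length * (c.blocks.map a).prod

theorem altCompositionSum_zero (a : ℕ → R) : altCompositionSum a 0 = 1 := by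
  rw [altCompositionSum, Fintype.sum_eq_single (Composition.ones 0) fun c hc =>
    absurd (Composition.ext ((c.blocks_eq_nil).2 rfl)) hc]
  simp

theorem sum_composition_succ_head_mul_tail (a b : ℕ → R) (n : ℕ) :
    ∑ c : Composition (n + 1), (-1) ^ c.length * b c.blocks.headI * (c.blocks.tail.map a).prod =
      -∑ p ∈ antidiagonal n, b (p.1 + 1) * altCompositionSum a p.2 := by
  simp_rw [← Composition.blocks_length]
  rw [Composition.sum_succ_eq_sum_antidiagonal
    fun L => (-1) ^ L.length * b L.headI * (L.tail.map a).prod, ← sum_neg_distrib]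
  refine sum_congr rfl fun p _ => ?_
  simp only [altCompositionSum, mul_sum, ← sum_neg_distrib, ← Composition.blocks_length]
  refine sum_congr rfl fun c _ => ?_
  simp only [List.length_cons, List.headI_cons, List.tail_cons, pow_succ]
  ring

theorem altCompositionSum_succ (a : ℕ → R) (n : ℕ) :
    altCompositionSum a (n + 1) =
      -∑ p ∈ antidiagonal n, a (p.1 + 1) * altCompositionSum a p.2 := by
  rw [altCompositionSum, ← sum_composition_succ_head_mul_tail]
  refine sum_congr rfl fun c _ => ?_
  nth_rw 1 [← c.headI_cons_tail]
  rw [List.map_cons, List.prod_cons, mul_assoc]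

theorem mk_mul_mk_altCompositionSum {a : ℕ → R} (ha : a 0 = 1) :
    mk a * mk (altCompositionSum a) = 1 := by
  ext (_ | n)
  · simp [ha, altCompositionSum_zero]
  · rw [coeff_mul, Nat.sum_antidiagonal_succ, coeff_one, if_neg n.succ_ne_zero]
    simp only [coeff_mk, ha, one_mul, altCompositionSum_succ, neg_add_cancel]

end AltCompositionSum

theorem Nat.choose_succ_sub_add_one (m b : ℕ) :
    (m + 1 - b).choose (b + 1) = (m - b).choose (b + 1) + (m - b).choose b := by
  rcases le_or_gt b m with hb | hb
  · rw [Nat.sub_add_comm hb, Nat.choose_succ_succ', add_comm]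
  · rw [Nat.sub_eq_zero_of_le hb, Nat.sub_eq_zero_of_le hb.le,
      Nat.choose_eq_zero_of_lt (by omega : 0 < b), add_zero]

namespace PowerSeries

variable {R : Type*} [CommRing R]

variable (R) in
noncomputable def fibPoly : ℕ → R⟦X⟧
  | 0 => 0
  | 1 => 1
  | n + 2 => fibPoly (n + 1) + X * fibPoly n

theorem fibPoly_add_two (n : ℕ) : fibPoly R (n + 2) = fibPoly R (n + 1) + X * fibPoly R n := rfl

theorem coeff_fibPoly_succ (n b : ℕ) : coeff b (fibPoly R (n + 1)) = (n - b).choose b := by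
  induction n using Nat.twoStepInduction generalizing b with
  | zero => cases b <;> simp [fibPoly, coeff_one]
  | one => rcases b with _ | _ | b <;> simp [fibPoly, coeff_one]
  | more n ih₀ ih₁ =>
    cases b with
    | zero => simpa [fibPoly_add_two] using ih₁ 0
    | succ b =>
      rw [fibPoly_add_two, map_add, coeff_succ_X_mul, ih₀, ih₁, ← Nat.cast_add,
        show n + 2 - (b + 1) = n + 1 - b by omega, Nat.choose_succ_sub_add_one]
      simp

variable (R) in
noncomputable def signedCatalanSeries : R⟦X⟧ :=
  rescale (-1) (map (Nat.castRingHom R) catalanSeries)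

theorem coeff_signedCatalanSeries (n : ℕ) :
    coeff n (signedCatalanSeries R) = (-1) ^ n * catalan n := by
  simp [signedCatalanSeries, coeff_rescale]

theorem signedCatalanSeries_add_X_mul_sq :
    signedCatalanSeries R + X * signedCatalanSeries R ^ 2 = 1 := by
  have h := congrArg ((rescale (-1 : R)).comp (map (Nat.castRingHom R)))
    catalanSeries_sq_mul_X_add_one
  simp only [RingHom.comp_apply, map_add, map_mul, map_pow, map_one, map_X, rescale_X, map_neg,
    neg_one_mul] at h
  rw [← signedCatalanSeries] at h
  linear_combination -h

theorem X_pow_dvd_signedCatalanSeries_mul_fibPoly_sub (n : ℕ) :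
    X ^ n ∣ signedCatalanSeries R * fibPoly R (n + 1) - fibPoly R n := by
  induction n with
  | zero => exact one_dvd _
  | succ n ih =>
    obtain ⟨d, hd⟩ := ih
    refine ⟨-signedCatalanSeries R * d, ?_⟩
    rw [fibPoly_add_two]
    linear_combination fibPoly R (n + 1) * signedCatalanSeries_add_X_mul_sq (R := R) -
      X * signedCatalanSeries R * hd

theorem coeff_fibPoly_mul_eq_of_mul_eq_one {n m : ℕ} (hm : m < n) {T : R⟦X⟧}
    (hT : fibPoly R (n + 1) * T = 1) : coeff m (fibPoly R n * T) = (-1) ^ m * catalan m := by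
  obtain ⟨d, hd⟩ := X_pow_dvd_signedCatalanSeries_mul_fibPoly_sub (R := R) n
  have h : signedCatalanSeries R - fibPoly R n * T = X ^ n * (d * T) := by
    linear_combination T * hd - signedCatalanSeries R * hT
  have := congrArg (coeff m) h
  rw [map_sub, coeff_X_pow_mul', if_neg (by omega), sub_eq_zero, coeff_signedCatalanSeries] at this
  exact this.symm

end PowerSeries

theorem composition_sum_eq_catalan (l m : ℕ) (hm : 1 ≤ m) (hlm : m ≤ l) :
    ∑ c : Composition m,
      (-1 : ℤ) ^ c.length * (l - c.blocks.headI).choose (c.blocks.headI - 1) *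
        ((c.blocks.tail.map (fun b => ((l - b).choose b : ℤ))).prod)
    = (-1 : ℤ) ^ m * catalan (m - 1) := by
  obtain ⟨n, rfl⟩ := Nat.exists_eq_add_of_le' hm
  obtain ⟨k, rfl⟩ : ∃ k, l = k + 1 := ⟨l - 1, by omega⟩
  have hfirst : mk (fun i => ((k + 1 - (i + 1)).choose i : ℤ)) = fibPoly ℤ (k + 1) := by
    ext i; simp [coeff_fibPoly_succ]
  have hblock : mk (fun j => ((k + 1 - j).choose j : ℤ)) = fibPoly ℤ (k + 2) := by
    ext j; simp [coeff_fibPoly_succ]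
  have hinv := mk_mul_mk_altCompositionSum (a := fun j => ((k + 1 - j).choose j : ℤ)) (by simp)
  rw [hblock] at hinv
  have hcoeff := coeff_fibPoly_mul_eq_of_mul_eq_one (by omega : n < k + 1) hinv
  rw [← hfirst, coeff_mul] at hcoeff
  simp only [coeff_mk] at hcoeff
  rw [sum_composition_succ_head_mul_tail (fun j => ((k + 1 - j).choose j : ℤ))
    (fun j => ((k + 1 - j).choose (j - 1) : ℤ))]
  simp only [Nat.add_sub_cancel]
  rw [hcoeff]
  ring
end

section
/- For every integer l ≥ 1, the sum over all t ≥ 1 and all compositions (m_1, ..., m_t) of l with each m_j ≥ 1, of (-1)^t · binomial(l - m_1, m_1 - 1) · ∏_{j=2}^{t} binomial(l - m_j, m_j), equals (-1)^l · C_{l-1}. -/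
/-!
Write `J n` for the Jacobsthal polynomials, `J (n + 2) = J (n + 1) + X * J n`, so that
`J (l + 1) = ∑ₘ (l - m).choose m * X ^ m`. Expanding `1 / J (l + 1)` as a geometric series
gives a sum over compositions, and the sum in question becomes `-[X ^ (l - 1)] (J l / J (l + 1))`.
The signed Catalan series `c = ∑ (-1)ⁿ catalan n Xⁿ` solves `c = 1 - X c²`, and from this
`c J (n + 1) = J n + (-X)ⁿ cⁿ⁺¹`: the ratio `J l / J (l + 1)` agrees with `c` up to order `l - 1`.
-/

open Finset PowerSeries

@[simp]
theorem Composition.blocks_zero (c : Composition 0) : c.blocks = [] :=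
  c.blocks_eq_nil.2 rfl

instance : Unique (Composition 0) where
  default := Composition.ones 0
  uniq c := Composition.ext <| by simp

theorem Composition.sum_blocks_succ {M : Type*} [AddCommMonoid M] (n : ℕ) (f : List ℕ → M) :
    ∑ c : Composition (n + 1), f c.blocks =
      ∑ p ∈ antidiagonal n, ∑ c : Composition p.2, f ((p.1 + 1) :: c.blocks) := by
  rw [sum_sigma']
  refine (sum_bij (fun x hx => ⟨(x.1.1 + 1) :: x.2.blocks, ?pos, ?sum⟩) ?_ ?inj ?surj ?_).symm
  case pos =>
    intro i hi
    rcases List.mem_cons.1 hi with rfl | hi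
    · omega
    · exact x.2.blocks_pos hi
  case sum =>
    simp only [mem_sigma, HasAntidiagonal.mem_antidiagonal] at hx
    rw [List.sum_cons, x.2.blocks_sum]
    omega
  · simp
  case inj =>
    rintro ⟨⟨i, j⟩, c⟩ hc ⟨⟨i', j'⟩, c'⟩ hc' h
    simp only [mem_sigma, HasAntidiagonal.mem_antidiagonal] at hc hc'
    simp only [Composition.ext_iff, List.cons.injEq, add_left_inj] at h
    obtain ⟨rfl, hblocks⟩ := h
    obtain rfl : j = j' := by omega
    simp [Composition.ext hblocks]
  case surj =>
    rintro ⟨_ | ⟨b, bs⟩, hpos, hsum⟩ -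
    · simp at hsum
    have hb : 0 < b := hpos List.mem_cons_self
    simp only [List.sum_cons] at hsum
    refine ⟨⟨(b - 1, bs.sum), ⟨bs, fun h => hpos (List.mem_cons_of_mem _ h), rfl⟩⟩, ?_, ?_⟩
    · simp only [mem_sigma, HasAntidiagonal.mem_antidiagonal, mem_univ, and_true]; omega
    · refine Composition.ext (congrArg (· :: bs) ?_)
      show b - 1 + 1 = b; omega
  · intros; rfl

theorem List.prod_map_neg_apply {α M : Type*} [CommMonoid M] [HasDistribNeg M] (l : List α)
    (f : α → M) : (l.map fun a => -f a).prod = (-1) ^ l.length * (l.map f).prod := by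
  simpa [Function.comp_def] using (l.map f).prod_map_neg

theorem PowerSeries.mk_sum_composition_mul_self {R : Type*} [CommRing R] (f : R⟦X⟧)
    (hf : constantCoeff f = 1) :
    mk (fun r => ∑ c : Composition r, (c.blocks.map fun b => -coeff b f).prod) * f = 1 := by
  ext r
  rw [coeff_mul, coeff_one]
  cases r with
  | zero => simp [hf]
  | succ r =>
    rw [Nat.sum_antidiagonal_succ', coeff_mk,
      Composition.sum_blocks_succ r fun L => (L.map fun b => -coeff b f).prod,
      ← Nat.sum_antidiagonal_swap, coeff_zero_eq_constantCoeff_apply, hf, mul_one,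
      ← sum_add_distrib, if_neg r.succ_ne_zero]
    refine sum_eq_zero fun p _ => ?_
    simp only [List.map_cons, List.prod_cons, ← mul_sum, Prod.fst_swap, Prod.snd_swap, coeff_mk]
    ring

def jacobsthal {R : Type*} [Semiring R] (x : R) : ℕ → R
  | 0 => 0
  | 1 => 1
  | n + 2 => jacobsthal x (n + 1) + x * jacobsthal x n

theorem coeff_jacobsthal_X {R : Type*} [Semiring R] (n m : ℕ) :
    coeff m (jacobsthal (X : R⟦X⟧) (n + 1)) = (n - m).choose m := by
  induction n using Nat.twoStepInduction generalizing m with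
  | zero => cases m <;> simp [jacobsthal, coeff_one]
  | one => cases m <;> simp [jacobsthal, coeff_one]
  | more n ih ih1 =>
    rw [jacobsthal, map_add, ih1]
    cases m with
    | zero => simp
    | succ m =>
      rw [coeff_succ_X_mul, ih, ← Nat.cast_add]
      congr 1
      rw [Nat.add_sub_add_right, show n + 2 - (m + 1) = n + 1 - m by omega]
      rcases le_or_gt m n with h | h
      · rw [Nat.sub_add_comm h, Nat.choose_succ_succ', add_comm]
      · simp [Nat.sub_eq_zero_of_le, h, h.le, Nat.choose_eq_zero_of_lt (n.zero_le.trans_lt h)]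

theorem mul_jacobsthal_neg_succ {R : Type*} [CommRing R] {x c : R} (hc : c ^ 2 * x + 1 = c)
    (n : ℕ) : c * jacobsthal (-x) (n + 1) = jacobsthal (-x) n + x ^ n * c ^ (n + 1) := by
  induction n using Nat.twoStepInduction with
  | zero => simp [jacobsthal]
  | one =>
    simp only [jacobsthal]
    linear_combination (-1 : R) * hc
  | more n ih ih1 =>
    simp only [jacobsthal] at ih1 ⊢
    linear_combination ih1 - x * ih - x ^ (n + 1) * c ^ (n + 1) * hc

theorem coeff_jacobsthal_X_mul_eq_catalan {R : Type*} [CommRing R] (k : ℕ) {g : R⟦X⟧}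
    (hg : g * jacobsthal X (k + 2) = 1) :
    coeff k (jacobsthal X (k + 1) * g) = (-1) ^ k * (catalan k : R) := by
  set c := rescale (-1 : R) (map (Nat.castRingHom R) catalanSeries)
  have hc : c ^ 2 * (-X) + 1 = c := by
    simpa [c] using congrArg (fun f => rescale (-1 : R) (map (Nat.castRingHom R) f))
      catalanSeries_sq_mul_X_add_one
  have hrec := mul_jacobsthal_neg_succ hc (k + 1)
  rw [neg_neg] at hrec
  have hsplit :
      jacobsthal X (k + 1) * g = c - X ^ (k + 1) * ((-1) ^ (k + 1) * c ^ (k + 2) * g) := by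
    linear_combination c * hg - g * hrec
  rw [hsplit, map_sub, coeff_X_pow_mul', if_neg (by omega), sub_zero]
  simp [c, coeff_rescale]

theorem composition_sum_eq_catalan_self_general (l : ℕ) :
    ∑ c : Composition l,
      (-1 : ℤ) ^ c.length * (l - c.blocks.headI).choose (c.blocks.headI - 1) *
        ((c.blocks.tail.map (fun b => ((l - b).choose b : ℤ))).prod)
    = (-1 : ℤ) ^ l * catalan (l - 1) := by
  rcases l with _ | k
  · simp [Composition.length]
  set g : ℤ⟦X⟧ := mk fun r => ∑ c : Composition r,
    (c.blocks.map fun b => -coeff b (jacobsthal X (k + 2))).prod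
  have hg : g * jacobsthal X (k + 2) = 1 :=
    mk_sum_composition_mul_self _ (by simp [← coeff_zero_eq_constantCoeff_apply, coeff_jacobsthal_X])
  calc _ = -∑ p ∈ antidiagonal k, coeff p.1 (jacobsthal X (k + 1)) * coeff p.2 g := by
        rw [Composition.sum_blocks_succ k fun L => (-1 : ℤ) ^ L.length *
          (k + 1 - L.headI).choose (L.headI - 1) *
            (L.tail.map fun b => ((k + 1 - b).choose b : ℤ)).prod, ← sum_neg_distrib]
        refine sum_congr rfl fun p _ => ?_
        simp only [List.headI_cons, List.tail_cons, List.length_cons, Nat.add_sub_add_right,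
          Nat.add_sub_cancel, coeff_jacobsthal_X, g, coeff_mk, List.prod_map_neg_apply, mul_sum,
          ← sum_neg_distrib]
        exact sum_congr rfl fun c _ => by ring
    _ = (-1) ^ (k + 1) * catalan k := by
        rw [← coeff_mul, coeff_jacobsthal_X_mul_eq_catalan k hg]
        ring

theorem composition_sum_eq_catalan_self (l : ℕ) (hl : 1 ≤ l) :
    ∑ c : Composition l,
      (-1 : ℤ) ^ c.length * (l - c.blocks.headI).choose (c.blocks.headI - 1) *
        ((c.blocks.tail.map (fun b => ((l - b).choose b : ℤ))).prod)
    = (-1 : ℤ) ^ l * catalan (l - 1) :=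
  composition_sum_eq_catalan_self_general l
end

section
/- For integers l ≥ m ≥ 0 with l ≥ 2m+1, ∑_{k=0}^{m} (-1)^k · binomial(l - m + k, m - k) · C_k = binomial(l - m - 1, m), where C_k is the k-th Catalan number. -/
/-!
Write `S n m = ∑_{k ≤ m} (-1)^k C(n + k, m - k) C_k`. Pascal's rule in each summand gives
`S (n+1) (m+1) = S n (m+1) + S n m`, the recursion of `C(n - 1, m)`, so it suffices to check
the row `S 1 (m+1) = 0`. That row is a Wilf–Zeilberger telescope: with
`G k = -(2k - m + 1)(2k - m) · (summand k)`, one has `G (k+1) - G k = m(m+1) · (summand k)`.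
-/

open Finset

theorem catalan_succ_mul (k : ℕ) :
    (k + 2) * catalan (k + 1) = 2 * (2 * k + 1) * catalan k := by
  apply Nat.eq_of_mul_eq_mul_left k.succ_pos
  calc (k + 1) * ((k + 2) * catalan (k + 1))
      = (k + 1) * ((k + 1 + 1) * catalan (k + 1)) := rfl
    _ = (k + 1) * Nat.centralBinom (k + 1) := by rw [succ_mul_catalan_eq_centralBinom]
    _ = 2 * (2 * k + 1) * Nat.centralBinom k := Nat.succ_mul_centralBinom_succ k
    _ = (k + 1) * (2 * (2 * k + 1) * catalan k) := by
        rw [← succ_mul_catalan_eq_centralBinom]; ring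

section CommRing

variable {R : Type*} [CommRing R]

theorem cast_choose_mul_succ_eq (n k : ℕ) :
    (n.choose k : R) * (n + 1) = (n + 1).choose k * ((n : R) + 1 - k) := by
  rcases le_or_gt k (n + 1) with hk | hk
  · have h := congrArg (Nat.cast : ℕ → R) (Nat.choose_mul_succ_eq n k)
    push_cast [hk] at h
    exact h
  · simp [Nat.choose_eq_zero_of_lt hk, Nat.choose_eq_zero_of_lt (Nat.lt_of_succ_lt hk)]

theorem cast_choose_add_two_mul_eq (n i : ℕ) :
    ((n : R) + 2 - i) * ((n : R) + 1 - i) * (n + 2).choose i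
      = (i + 1) * (n + 2) * (n + 1).choose (i + 1) := by
  have h₁ := cast_choose_mul_succ_eq (R := R) n i
  have h₂ := cast_choose_mul_succ_eq (R := R) (n + 1) i
  have h₃ := congrArg (Nat.cast : ℕ → R) (Nat.add_one_mul_choose_eq n i)
  push_cast at h₁ h₂ h₃
  linear_combination (-((n : R) + 1 - i)) * h₂ - ((n : R) + 2) * h₁ + ((n : R) + 2) * h₃

end CommRing

def alternatingCatalanTerm (n m k : ℕ) : ℤ :=
  (-1) ^ k * (n + k).choose (m - k) * catalan k

def alternatingCatalanSum (n m : ℕ) : ℤ :=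
  ∑ k ∈ range (m + 1), alternatingCatalanTerm n m k

theorem alternatingCatalanSum_zero_right (n : ℕ) : alternatingCatalanSum n 0 = 1 := by
  simp [alternatingCatalanSum, alternatingCatalanTerm]

theorem alternatingCatalanSum_succ_succ (n m : ℕ) :
    alternatingCatalanSum (n + 1) (m + 1)
      = alternatingCatalanSum n (m + 1) + alternatingCatalanSum n m := by
  have pascal : ∀ k ∈ range (m + 1), alternatingCatalanTerm (n + 1) (m + 1) k
      = alternatingCatalanTerm n (m + 1) k + alternatingCatalanTerm n m k := by
    intro k hk
    have hsub : m + 1 - k = m - k + 1 := by have := mem_range.mp hk; omega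
    simp only [alternatingCatalanTerm, hsub, Nat.add_right_comm n 1 k, Nat.choose_succ_succ]
    push_cast
    ring
  rw [alternatingCatalanSum, alternatingCatalanSum, alternatingCatalanSum, sum_range_succ,
    sum_range_succ _ (m + 1), sum_congr rfl pascal, sum_add_distrib]
  simp only [alternatingCatalanTerm, Nat.sub_self, Nat.choose_zero_right]
  ring

theorem alternatingCatalanTerm_wz_step {m k : ℕ} (hk : k < m) :
    -((2 * (k + 1) : ℤ) - m + 1) * ((2 * (k + 1) : ℤ) - m) * alternatingCatalanTerm 1 m (k + 1)
      + ((2 * k : ℤ) - m + 1) * ((2 * k : ℤ) - m) * alternatingCatalanTerm 1 m k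
    = m * (m + 1) * alternatingCatalanTerm 1 m k := by
  obtain ⟨i, rfl⟩ : ∃ i, m = k + 1 + i := ⟨m - k - 1, by omega⟩
  have hchoose := cast_choose_add_two_mul_eq (R := ℤ) k i
  have hcatalan : ((k : ℤ) + 2) * catalan (k + 1) = 2 * (2 * k + 1) * catalan k := by
    exact_mod_cast catalan_succ_mul k
  have e₁ : k + 1 + i - (k + 1) = i := by omega
  have e₂ : k + 1 + i - k = i + 1 := by omega
  have e₃ : 1 + (k + 1) = k + 2 := by omega
  simp only [alternatingCatalanTerm, e₁, e₂, e₃, Nat.add_comm 1 k]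
  push_cast [pow_succ]
  linear_combination (-1 : ℤ) ^ k * (catalan (k + 1) : ℤ) * hchoose
    + (-1 : ℤ) ^ k * ((k + 1).choose (i + 1) : ℤ) * ((i : ℤ) + 1) * hcatalan

theorem alternatingCatalanSum_one_succ (m : ℕ) : alternatingCatalanSum 1 (m + 1) = 0 := by
  set M := m + 1
  let G : ℕ → ℤ := fun k =>
    -((2 * k : ℤ) - M + 1) * ((2 * k : ℤ) - M) * alternatingCatalanTerm 1 M k
  have hstep : ∀ k ∈ range M,
      (M : ℤ) * (M + 1) * alternatingCatalanTerm 1 M k = G (k + 1) - G k := by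
    intro k hk
    rw [← alternatingCatalanTerm_wz_step (mem_range.mp hk)]
    simp only [G]
    push_cast
    ring
  have hG₀ : G 0 = 0 := by
    rcases m with _ | m
    · simp [G, alternatingCatalanTerm, M]
    · simp [G, alternatingCatalanTerm, M, Nat.choose_eq_zero_of_lt (show 1 < m + 2 by omega)]
  have hGM : G M = -((M : ℤ) + 1) * M * alternatingCatalanTerm 1 M M := by
    simp only [G]
    ring
  have hscaled : (M : ℤ) * (M + 1) * alternatingCatalanSum 1 M = 0 := by
    rw [alternatingCatalanSum, sum_range_succ, mul_add, mul_sum, sum_congr rfl hstep,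
      sum_range_sub, hG₀, hGM]
    ring
  have hM₀ : (M : ℤ) * (M + 1) ≠ 0 := by positivity
  exact (mul_eq_zero.mp hscaled).resolve_left hM₀

theorem alternatingCatalanSum_succ (n m : ℕ) : alternatingCatalanSum (n + 1) m = n.choose m := by
  induction n generalizing m with
  | zero =>
    rcases m with _ | m
    · simp [alternatingCatalanSum_zero_right]
    · simp [alternatingCatalanSum_one_succ]
  | succ n ih =>
    rcases m with _ | m
    · simp [alternatingCatalanSum_zero_right]
    · rw [alternatingCatalanSum_succ_succ, ih, ih, Nat.choose_succ_succ]
      push_cast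
      ring

theorem catalan_binomial_identity_general (l m : ℕ) (hl : 2 * m + 1 ≤ l) :
    ∑ k ∈ Finset.range (m + 1),
      (-1 : ℤ) ^ k * (l - m + k).choose (m - k) * catalan k
    = (l - m - 1).choose m := by
  obtain ⟨n, hn⟩ : ∃ n, l - m = n + 1 := ⟨l - m - 1, by omega⟩
  rw [hn, Nat.add_sub_cancel]
  exact alternatingCatalanSum_succ n m

theorem catalan_binomial_identity (l m : ℕ) (hlm : m ≤ l) (hl : 2 * m + 1 ≤ l) :
    ∑ k ∈ Finset.range (m + 1),
      (-1 : ℤ) ^ k * (l - m + k).choose (m - k) * catalan k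
    = (l - m - 1).choose m :=
  catalan_binomial_identity_general l m hl
end

section
/- The sequence f(m) = ∑_{k=0}^{m} (-1)^k · C_k · binomial(l - m + k, m - k) / binomial(l - m - 1, m) satisfies, for all m with 1 ≤ m and l ≥ 2m+3 (so all binomials are nonzero), the recurrence -(m+1)·f(m) + (m+2)·f(m+1) = 1; consequently f(m) = 1 for all such m. -/
/-- `f l m = ∑_{k=0}^m (-1)^k C_k * choose (l-m+k) (m-k) / choose (l-m-1) m` in `ℚ`. -/
noncomputable def f (l m : ℕ) : ℚ :=
  ∑ k ∈ Finset.range (m + 1),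
    (-1 : ℚ) ^ k * catalan k * ((l - m + k).choose (m - k) : ℚ) /
      ((l - m - 1).choose m : ℚ)

/-!
The Catalan series `c(y) = ∑ C_k y^k` satisfies `y c² - c + 1 = 0`. After the substitution
`y = -x(1+x)` this quadratic has `1/(1+x)` as its only power-series solution, so
`(1+x)^(n+1) c(-x(1+x)) = (1+x)^n`. The coefficient of `x^m` on the left is
`∑_k (-1)^k C_k binom(n+1+k, m-k)`, and on the right it is `binom(n, m)`; with `n = l-m-1` this is
the numerator of `f l m` equal to its denominator. Everything is done with polynomials modulo
`x^(m+1)`, where the truncated Catalan series is enough.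
-/

open Polynomial Finset

section CatalanPoly

variable (R : Type*) [CommRing R]

noncomputable def catalanPoly (N : ℕ) : R[X] :=
  ∑ k ∈ range (N + 1), C (catalan k : R) * X ^ k

variable {R}

theorem coeff_catalanPoly (N d : ℕ) :
    (catalanPoly R N).coeff d = if d ≤ N then (catalan d : R) else 0 := by
  simp only [catalanPoly, finsetSum_coeff, coeff_C_mul_X_pow, sum_ite_eq, mem_range,
    Nat.lt_succ_iff]

theorem X_pow_dvd_X_mul_catalanPoly_sq_sub (N : ℕ) :
    X ^ (N + 1) ∣ X * catalanPoly R N ^ 2 - catalanPoly R N + 1 := by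
  rw [X_pow_dvd_iff]
  rintro (_ | d) hd
  · simp [coeff_catalanPoly]
  have hsq : (catalanPoly R N ^ 2).coeff d = catalan (d + 1) := by
    rw [sq, coeff_mul, catalan_succ', Nat.cast_sum]
    refine sum_congr rfl fun ij hij => ?_
    have := mem_antidiagonal.mp hij
    rw [coeff_catalanPoly, coeff_catalanPoly, if_pos (by omega), if_pos (by omega), Nat.cast_mul]
  simp only [coeff_add, coeff_sub, coeff_X_mul, hsq, coeff_catalanPoly,
    if_pos (by omega : d + 1 ≤ N), coeff_one, if_neg d.succ_ne_zero]
  ring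

end CatalanPoly

section Substitution

variable {R : Type*} [CommRing R]

theorem X_pow_dvd_comp {n : ℕ} {r q : R[X]} (hr : X ^ n ∣ r) (hq : X ∣ q) :
    X ^ n ∣ r.comp q := by
  obtain ⟨s, rfl⟩ := hr
  rw [mul_comp, X_pow_comp]
  exact (pow_dvd_pow_of_dvd hq n).mul_right _

theorem X_pow_dvd_one_add_X_mul_sub_one {n : ℕ} {P : R[X]}
    (hP : X ^ n ∣ -(X * (1 + X)) * P ^ 2 - P + 1) : X ^ n ∣ (1 + X) * P - 1 := by
  have hfactor : (1 + X) * (-(X * (1 + X)) * P ^ 2 - P + 1) =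
      ((1 + X) * P - 1) * -(1 + X * ((1 + X) * P + 1)) := by ring
  have hcop : IsCoprime (X : R[X]) (-(1 + X * ((1 + X) * P + 1))) :=
    ⟨-((1 + X) * P + 1), -1, by ring⟩
  exact hcop.pow_left.dvd_of_dvd_mul_right (hfactor ▸ hP.mul_left _)

theorem X_pow_dvd_one_add_X_mul_catalanPoly_comp_sub_one (N : ℕ) :
    X ^ (N + 1) ∣ (1 + X) * (catalanPoly R N).comp (-(X * (1 + X))) - 1 := by
  apply X_pow_dvd_one_add_X_mul_sub_one
  have h := X_pow_dvd_comp (X_pow_dvd_X_mul_catalanPoly_sq_sub (R := R) N)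
    (dvd_neg.mpr (dvd_mul_right X (1 + X)))
  simpa only [add_comp, sub_comp, mul_comp, pow_comp, X_comp, one_comp] using h

theorem coeff_one_add_X_pow_mul_catalanPoly_comp (n m : ℕ) :
    ((1 + X) ^ (n + 1) * (catalanPoly R m).comp (-(X * (1 + X)))).coeff m =
      ∑ k ∈ range (m + 1), (-1 : R) ^ k * catalan k * ((n + 1 + k).choose (m - k) : R) := by
  simp only [catalanPoly, Polynomial.sum_comp, mul_comp, C_comp, pow_comp, X_comp, mul_sum,
    finsetSum_coeff]
  refine sum_congr rfl fun k hk => ?_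
  have hterm : (1 + X) ^ (n + 1) * (C (catalan k : R) * (-(X * (1 + X))) ^ k) =
      C ((-1 : R) ^ k * catalan k) * (X ^ k * (1 + X) ^ (n + 1 + k)) := by
    rw [C_mul, C_pow, C_neg, C_1, neg_pow, mul_pow, pow_add]
    ring
  rw [hterm, coeff_C_mul, coeff_X_pow_mul', if_pos (by simpa [Nat.lt_succ_iff] using hk),
    coeff_one_add_X_pow]

end Substitution

theorem sum_neg_one_pow_mul_catalan_mul_choose (R : Type*) [CommRing R] (n m : ℕ) :
    ∑ k ∈ range (m + 1), (-1 : R) ^ k * catalan k * ((n + 1 + k).choose (m - k) : R) =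
      n.choose m := by
  rw [← coeff_one_add_X_pow_mul_catalanPoly_comp, ← coeff_one_add_X_pow R n m,
    ← sub_eq_zero, ← coeff_sub]
  have hdiv := (X_pow_dvd_one_add_X_mul_catalanPoly_comp_sub_one (R := R) m).mul_left
    ((1 + X) ^ n)
  rw [mul_sub, ← mul_assoc, ← pow_succ, mul_one] at hdiv
  exact X_pow_dvd_iff.mp hdiv m m.lt_succ_self

theorem f_eq_one {l m : ℕ} (hl : 2 * m + 1 ≤ l) : f l m = 1 := by
  obtain ⟨n, hn⟩ : ∃ n, l - m = n + 1 := ⟨l - m - 1, by omega⟩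
  have hchoose : (n.choose m : ℚ) ≠ 0 := Nat.cast_ne_zero.mpr (Nat.choose_pos (by omega)).ne'
  rw [f, hn, Nat.add_sub_cancel, ← sum_div, div_eq_one_iff_eq hchoose,
    ← sum_neg_one_pow_mul_catalan_mul_choose]

theorem f_recurrence_and_value_general (l m : ℕ) (hl : 2 * m + 3 ≤ l) :
    (-((m : ℚ) + 1) * f l m + ((m : ℚ) + 2) * f l (m + 1) = 1) ∧ f l m = 1 := by
  rw [f_eq_one (by omega), f_eq_one (by omega)]
  norm_num

theorem f_recurrence_and_value (l m : ℕ) (hm : 1 ≤ m) (hl : 2 * m + 3 ≤ l) :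
    (-((m : ℚ) + 1) * f l m + ((m : ℚ) + 2) * f l (m + 1) = 1) ∧ f l m = 1 :=
  f_recurrence_and_value_general l m hl
end

section
/- For every s ≥ 1, the number of pairs (T, w) where T is a complete binary tree with an odd number of leaves, w is a labeling of the leaves of T by elements of {1, 2} summing to s+1, equals the number of such pairs where T has an even number of leaves. -/
/-!
A tree with `t + 1` leaves can be chosen in `catalan t` ways, and a `{1, 2}`-labeling of its
leaves summing to `s + 1` amounts to choosing the `s - t` leaves labelled `2`. So the claim is
`∑ₜ (-1)ᵗ Cₜ (t+1 choose s-t) = 0` for `s ≥ 1`, i.e. `(1 + x) C(-x(1+x)) = 1` for the Catalan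
series `C = 1 + x C²`. With `u = -x(1+x)`, `g = C(u)` satisfies `g = 1 + u g²`, and then the
factorisation `((1+x) g - 1)(1 + x((1+x) g + 1)) = -(1+x)(1 + u g² - g)`, whose second factor
on the left is a unit modulo `x`, forces `(1 + x) g = 1`. Truncating `C` at degree `s`, all of this holds modulo
`x ^ (s + 1)`.
-/

open Finset

section Labelings

variable {α : Type*} [Fintype α]

lemma sum_fin_two_val_eq_card_filter (w : α → Fin 2) :
    ∑ j, (w j : ℕ) = #{j | w j = 1} := by
  rw [card_filter]
  exact sum_congr rfl fun j _ => by generalize w j = i; fin_cases i <;> rfl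

variable [DecidableEq α]

def finTwoFunEquivFinset : (α → Fin 2) ≃ Finset α where
  toFun w := {j | w j = 1}
  invFun A j := if j ∈ A then 1 else 0
  left_inv w := funext fun j => by
    simp only [mem_filter, mem_univ, true_and]; generalize w j = i; fin_cases i <;> rfl
  right_inv A := by ext j; by_cases hj : j ∈ A <;> simp [hj]

lemma card_fin_two_fun_sum_eq (k : ℕ) :
    Fintype.card {w : α → Fin 2 // ∑ j, (w j : ℕ) = k} = (Fintype.card α).choose k := by
  rw [← Fintype.card_finset_len k]
  exact Fintype.card_congr <| finTwoFunEquivFinset.subtypeEquiv fun w => by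
    rw [sum_fin_two_val_eq_card_filter]; rfl

end Labelings

lemma card_one_two_labelings (L k : ℕ) :
    Fintype.card {w : Fin L → Fin 2 // ∑ j, ((w j : ℕ) + 1) = L + k} = L.choose k := by
  calc _ = Fintype.card {w : Fin L → Fin 2 // ∑ j, (w j : ℕ) = k} :=
        Fintype.card_congr <| Equiv.subtypeEquivRight fun w => by
          simp [sum_add_distrib, add_comm _ L]
    _ = L.choose k := by rw [card_fin_two_fun_sum_eq, Fintype.card_fin]

namespace Polynomial

variable {R : Type*} [CommRing R]

lemma X_pow_dvd_comp {n : ℕ} {p u : R[X]} (hp : X ^ n ∣ p) (hu : X ∣ u) : X ^ n ∣ p.comp u := by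
  obtain ⟨q, rfl⟩ := hp
  rw [mul_comp, X_pow_comp]
  exact (pow_dvd_pow_of_dvd hu n).mul_right _

lemma coeff_one_add_X_mul_sum_comp (a : ℕ → R) (s : ℕ) :
    ((1 + X) * (∑ t ∈ range (s + 1), C (a t) * X ^ t).comp (-(X * (1 + X)))).coeff s =
      ∑ t ∈ range (s + 1), (-1) ^ t * a t * (t + 1).choose (s - t) := by
  simp only [sum_comp, mul_comp, C_comp, X_pow_comp, mul_sum, finsetSum_coeff]
  refine sum_congr rfl fun t ht => ?_
  have hts : s = (s - t) + t := by have := mem_range.mp ht; omega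
  calc ((1 + X) * (C (a t) * (-(X * (1 + X))) ^ t)).coeff s
      = (C ((-1) ^ t * a t) * (X ^ t * (X + 1) ^ (t + 1))).coeff s := by
        congr 1; rw [map_mul, map_pow, map_neg, map_one, neg_pow, mul_pow]; ring
    _ = _ := by
        rw [coeff_C_mul]; conv_lhs => rw [hts, coeff_X_pow_mul, coeff_X_add_one_pow]

variable [IsDomain R]

lemma X_pow_dvd_one_add_X_mul_comp_sub_one {n : ℕ} {f : R[X]}
    (hf : X ^ n ∣ 1 + X * f ^ 2 - f) :
    X ^ n ∣ (1 + X) * f.comp (-(X * (1 + X))) - 1 := by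
  set u : R[X] := -(X * (1 + X))
  set g := f.comp u
  have hg : X ^ n ∣ 1 + u * g ^ 2 - g := by
    have := X_pow_dvd_comp hf (dvd_neg.mpr (dvd_mul_right X (1 + X)) : X ∣ u)
    rwa [sub_comp, add_comp, one_comp, mul_comp, X_comp, pow_comp] at this
  have hfactor : ((1 + X) * g - 1) * (1 + X * ((1 + X) * g + 1)) =
      -((1 + X) * (1 + u * g ^ 2 - g)) := by
    simp only [u]; ring
  have hunit : ¬ X ∣ 1 + X * ((1 + X) * g + 1) := by
    simp [X_dvd_iff, mul_coeff_zero]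
  refine prime_X.pow_dvd_of_dvd_mul_right n hunit ?_
  rw [hfactor]
  exact (hg.mul_left _).neg_right

end Polynomial

open Polynomial

noncomputable def catalanTrunc (n : ℕ) : ℤ[X] := ∑ t ∈ range (n + 1), C (catalan t : ℤ) * X ^ t

lemma coeff_catalanTrunc {n k : ℕ} (hk : k ≤ n) : (catalanTrunc n).coeff k = catalan k := by
  simp [catalanTrunc, finsetSum_coeff, coeff_X_pow, Nat.lt_succ_iff.mpr hk]

lemma X_pow_succ_dvd_catalanTrunc (n : ℕ) :
    X ^ (n + 1) ∣ 1 + X * catalanTrunc n ^ 2 - catalanTrunc n := by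
  rw [X_pow_dvd_iff]
  rintro (_ | m) hm
  · simp [mul_coeff_zero, coeff_catalanTrunc]
  · have hsq : (catalanTrunc n ^ 2).coeff m = catalan (m + 1) := by
      rw [sq, coeff_mul, catalan_succ']
      push_cast
      refine sum_congr rfl fun ij hij => ?_
      rw [HasAntidiagonal.mem_antidiagonal] at hij
      rw [coeff_catalanTrunc (by omega), coeff_catalanTrunc (by omega)]
    simp [coeff_X_mul, coeff_one, hsq, coeff_catalanTrunc (show m + 1 ≤ n by omega)]

theorem sum_range_neg_one_pow_mul_catalan_mul_choose {s : ℕ} (hs : 1 ≤ s) :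
    ∑ t ∈ range (s + 1), (-1 : ℤ) ^ t * catalan t * (t + 1).choose (s - t) = 0 := by
  have hdvd := X_pow_dvd_one_add_X_mul_comp_sub_one (X_pow_succ_dvd_catalanTrunc s)
  have hcoeff := (X_pow_dvd_iff.mp hdvd) s (Nat.lt_succ_self s)
  rwa [coeff_sub, coeff_one, if_neg (by omega), sub_zero, catalanTrunc,
    coeff_one_add_X_mul_sum_comp] at hcoeff

lemma sum_ite_even_eq_sum_ite_odd {S : Finset ℕ} {f : ℕ → ℕ}
    (h : ∑ t ∈ S, (-1 : ℤ) ^ t * f t = 0) :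
    ∑ t ∈ S, (if Even t then f t else 0) = ∑ t ∈ S, (if Odd t then f t else 0) := by
  zify
  rw [← sub_eq_zero, ← sum_sub_distrib]
  refine (sum_congr rfl fun t _ => ?_).trans h
  rcases Nat.even_or_odd t with ht | ht
  · simp [ht, ht.neg_one_pow, Nat.not_odd_iff_even.mpr ht]
  · simp [ht, ht.neg_one_pow, Nat.not_even_iff_odd.mpr ht]

lemma sum_treesOfNumNodesEq_labelings {s t : ℕ} (ht : t ≤ s) (P : ℕ → Prop) [DecidablePred P] :
    ∑ T ∈ BinaryTree.treesOfNumNodesEq t, (if P T.numLeaves then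
        Fintype.card {w : Fin T.numLeaves → Fin 2 // ∑ j, ((w j : ℕ) + 1) = s + 1} else 0) =
      if P (t + 1) then catalan t * (t + 1).choose (s - t) else 0 := by
  have hleaves : ∀ T ∈ BinaryTree.treesOfNumNodesEq t, T.numLeaves = t + 1 := fun T hT => by
    rw [BinaryTree.numLeaves_eq_numNodes_succ, BinaryTree.mem_treesOfNumNodesEq.mp hT]
  rw [sum_congr rfl fun T hT => by rw [hleaves T hT], sum_const,
    BinaryTree.treesOfNumNodesEq_card_eq_catalan, smul_eq_mul, mul_ite, mul_zero,
    show s + 1 = (t + 1) + (s - t) by omega, card_one_two_labelings]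

/-- For `s ≥ 1`, pairs `(T, w)` of a complete binary tree `T` (encoded as a
`Tree Unit`, whose leaves are the `nil`s) together with a labeling `w` of its
leaves by `{1, 2}` summing to `s + 1`: as many have an odd number of leaves as
an even number of leaves. -/
theorem odd_even_leaf_pairs (s : ℕ) (hs : 1 ≤ s) :
    ∑ t ∈ Finset.range (s + 1), ∑ T ∈ BinaryTree.treesOfNumNodesEq t,
      (if Odd T.numLeaves then
        Fintype.card {w : Fin T.numLeaves → Fin 2 // (∑ j, ((w j : ℕ) + 1)) = s + 1}
       else 0)
    = ∑ t ∈ Finset.range (s + 1), ∑ T ∈ BinaryTree.treesOfNumNodesEq t,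
      (if Even T.numLeaves then
        Fintype.card {w : Fin T.numLeaves → Fin 2 // (∑ j, ((w j : ℕ) + 1)) = s + 1}
       else 0) := by
  have hinner (P : ℕ → Prop) [DecidablePred P] := sum_congr rfl fun t ht =>
    sum_treesOfNumNodesEq_labelings (s := s) (mem_range_succ_iff.mp ht) P
  rw [hinner, hinner]
  simp only [Nat.odd_add_one, Nat.even_add_one, Nat.not_odd_iff_even, Nat.not_even_iff_odd]
  apply sum_ite_even_eq_sum_ite_odd
  simpa [mul_assoc] using sum_range_neg_one_pow_mul_catalan_mul_choose hs
end

section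
/- For m ≥ 1 and l ≥ 2m, ∑_{k=0}^{m-1} (-1)^k · binomial(l - m + k, m - k) · C_k = binomial(l - m - 1, m) - (-1)^m · C_m · binomial(l, 0) = binomial(l - m - 1, m) - (-1)^m · C_m. -/
open Nat Finset

lemma key_binom (m k : ℕ) (hk : k ≤ m) :
    (k+1)^2 * ((m+k+1).choose (2*k+2)) * ((2*k+2).choose (k+1))
      = (m-k)*(m+k+1)*((m+k).choose (2*k))*((2*k).choose k) := by
  rcases eq_or_lt_of_le hk with rfl | h
  · rw [Nat.choose_eq_zero_of_lt (by omega : k+k+1 < 2*k+2)]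
    simp [Nat.sub_self]
  · have e1 := Nat.choose_mul_factorial_mul_factorial (show 2*k ≤ m+k by omega)
    have e2 := Nat.choose_mul_factorial_mul_factorial (show k ≤ 2*k by omega)
    have e3 := Nat.choose_mul_factorial_mul_factorial (show 2*k+2 ≤ m+k+1 by omega)
    have e4 := Nat.choose_mul_factorial_mul_factorial (show k+1 ≤ 2*k+2 by omega)
    rw [show m + k - 2*k = m - k by omega] at e1
    rw [show 2*k - k = k by omega] at e2
    rw [show m + k + 1 - (2*k+2) = m - k - 1 by omega] at e3
    rw [show 2*k+2 - (k+1) = k+1 by omega] at e4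
    have e5 : (m-k) * Nat.factorial (m-k-1) = Nat.factorial (m-k) :=
      Nat.mul_factorial_pred (by omega)
    have f1 : (2*k+2)! = (2*k+2)*((2*k+1)*(2*k)!) := by
      rw [show 2*k+2 = (2*k+1)+1 from rfl, Nat.factorial_succ, Nat.factorial_succ]
    have f2 : (m+k+1)! = (m+k+1)*(m+k)! := Nat.factorial_succ _
    have f3 : (k+1)! = (k+1)*k ! := Nat.factorial_succ _
    have hM : 0 < (2*k+2)! * ((m-k-1)! * ((k+1)! * (k+1)!)) := by positivity
    apply Nat.eq_of_mul_eq_mul_right hM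
    calc (k+1)^2 * ((m+k+1).choose (2*k+2)) * ((2*k+2).choose (k+1))
          * ((2*k+2)! * ((m-k-1)! * ((k+1)! * (k+1)!)))
        = (k+1)^2 * ((m+k+1).choose (2*k+2) * (2*k+2)! * (m-k-1)!)
            * ((2*k+2).choose (k+1) * (k+1)! * (k+1)!) := by ring
      _ = (k+1)^2 * (m+k+1)! * (2*k+2)! := by rw [e3, e4]
      _ = (k+1)^2 * ((m+k+1)*(m+k)!) * ((2*k+2)*((2*k+1)*(2*k)!)) := by rw [f1, f2]
      _ = (m+k+1)*((2*k+2)*(2*k+1))*((k+1)*(k+1))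
            * ((m+k)! * (2*k)!) := by ring
      _ = (m+k+1)*((2*k+2)*(2*k+1))*((k+1)*(k+1))
            * (((m+k).choose (2*k) * (2*k)! * (m-k)!) * ((2*k).choose k * k ! * k !)) := by
          rw [e1, e2]
      _ = (m+k+1)*((2*k+2)*(2*k+1))*((k+1)*(k+1))
            * (((m+k).choose (2*k) * (2*k)! * ((m-k) * (m-k-1)!)) * ((2*k).choose k * k ! * k !)) := by
          rw [e5]
      _ = (m-k)*(m+k+1)*((m+k).choose (2*k))*((2*k).choose k)
          * ((2*k+2)! * ((m-k-1)! * ((k+1)! * (k+1)!))) := by rw [f1, f3]; ring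

lemma tele (m k : ℕ) (hk : k ≤ m) :
    ((m:ℤ)*(m+1)) * ((m+k).choose (2*k)) * catalan k
      = (k * ((m+k).choose (2*k)) * ((2*k).choose k) : ℤ)
        + ((k:ℤ)+1) * ((m+k+1).choose (2*k+2)) * ((2*k+2).choose (k+1)) := by
  have cb : ((k:ℤ)+1) * catalan k = ((2*k).choose k : ℤ) := by
    exact_mod_cast congrArg (Nat.cast : ℕ → ℤ) (succ_mul_catalan_eq_centralBinom k)
  have key' : ((k:ℤ)+1)^2 * ((m+k+1).choose (2*k+2)) * ((2*k+2).choose (k+1))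
      = ((m:ℤ)-k)*((m:ℤ)+k+1)*((m+k).choose (2*k))*((2*k).choose k) := by
    have := key_binom m k hk
    have h2 : ((m:ℤ) - k) = ((m - k : ℕ) : ℤ) := by
      rw [Nat.cast_sub hk]
    rw [h2]
    exact_mod_cast congrArg (Nat.cast : ℕ → ℤ) this
  have hne : ((k:ℤ)+1) ≠ 0 := by positivity
  apply mul_left_cancel₀ hne
  linear_combination ((m:ℤ)*(m+1)*((m+k).choose (2*k))) * cb - key'

lemma base_sum (m : ℕ) (hm : 1 ≤ m) :
    ∑ k ∈ range (m+1), (-1:ℤ)^k * ((m+k).choose (m-k)) * catalan k = 0 := by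
  have hsymm : ∀ k ∈ range (m+1),
      (-1:ℤ)^k * ((m+k).choose (m-k)) * catalan k
        = (-1:ℤ)^k * ((m+k).choose (2*k)) * catalan k := by
    intro k hk
    rw [mem_range] at hk
    have h2 : 2*k ≤ m + k := by omega
    have : (m+k).choose (m-k) = (m+k).choose (2*k) := by
      rw [show m - k = m + k - 2*k by omega, Nat.choose_symm h2]
    rw [this]
  rw [sum_congr rfl hsymm]
  set d : ℕ → ℤ := fun k => (k : ℤ) * ((m+k).choose (2*k)) * ((2*k).choose k) with hd
  have hstep : ∀ k ∈ range (m+1),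
      ((m:ℤ)*(m+1)) * ((-1:ℤ)^k * ((m+k).choose (2*k)) * catalan k)
        = (-1:ℤ)^k * d k - (-1:ℤ)^(k+1) * d (k+1) := by
    intro k hk
    rw [mem_range] at hk
    have := tele m k (by omega)
    simp only [hd]
    rw [show m+(k+1) = m+k+1 from rfl, show 2*(k+1) = 2*k+2 by ring]
    push_cast
    push_cast at this
    linear_combination ((-1:ℤ)^k) * this
  have h1 : ((m:ℤ)*(m+1)) * ∑ k ∈ range (m+1), (-1:ℤ)^k * ((m+k).choose (2*k)) * catalan k
      = ∑ k ∈ range (m+1), ((-1:ℤ)^k * d k - (-1:ℤ)^(k+1) * d (k+1)) := by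
    rw [mul_sum]
    exact sum_congr rfl hstep
  rw [Finset.sum_range_sub' (fun k => (-1:ℤ)^k * d k) (m+1)] at h1
  have hd0 : d 0 = 0 := by simp [hd]
  have hdm : d (m+1) = 0 := by
    simp only [hd]
    rw [Nat.choose_eq_zero_of_lt (by omega : m + (m+1) < 2*(m+1))]
    push_cast
    ring
  rw [hd0, hdm] at h1
  simp only [mul_zero, sub_zero] at h1
  have hmm : ((m:ℤ)*(m+1)) ≠ 0 := by
    have : (0:ℤ) < m := by exact_mod_cast hm
    positivity
  exact (mul_eq_zero.mp h1).resolve_left hmm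

lemma full_sum (n m : ℕ) :
    ∑ k ∈ range (m+1), (-1:ℤ)^k * ((n+m+k).choose (m-k)) * catalan k
      = ((n+m-1).choose m : ℤ) := by
  induction n generalizing m with
  | zero =>
    rcases Nat.eq_zero_or_pos m with rfl | hm
    · simp
    · rw [show (0 + m - 1).choose m = 0 from
        Nat.choose_eq_zero_of_lt (by omega)]
      push_cast
      rw [← base_sum m hm]
      apply sum_congr rfl
      intro k _
      rw [show 0 + m + k = m + k by omega]
  | succ n ih =>
    induction m with
    | zero => simp
    | succ m' ihm =>
      have pascal : ∀ k ∈ range (m'+1),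
          (-1:ℤ)^k * ((n+1+(m'+1)+k).choose (m'+1-k)) * catalan k
            = (-1:ℤ)^k * ((n+(m'+1)+k).choose ((m'+1)-k)) * catalan k
              + (-1:ℤ)^k * ((n+1+m'+k).choose (m'-k)) * catalan k := by
        intro k hk
        rw [mem_range] at hk
        rw [show n+1+(m'+1)+k = (n+1+m'+k) + 1 by omega,
          show n+(m'+1)+k = n+1+m'+k by omega]
        rw [show m'+1-k = (m'-k)+1 by omega, Nat.choose_succ_succ]
        push_cast [Nat.succ_eq_add_one]
        ring
      rw [Finset.sum_range_succ, sum_congr rfl pascal, Finset.sum_add_distrib]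
      have top_eq : (-1:ℤ)^(m'+1) * ((n+1+(m'+1)+(m'+1)).choose (m'+1-(m'+1))) * catalan (m'+1)
          = (-1:ℤ)^(m'+1) * ((n+(m'+1)+(m'+1)).choose (m'+1-(m'+1))) * catalan (m'+1) := by
        rw [Nat.sub_self]
        simp
      rw [top_eq]
      have houter := ih (m'+1)
      rw [Finset.sum_range_succ] at houter
      have hinner : ∑ k ∈ range (m'+1), (-1:ℤ)^k * ((n+1+m'+k).choose (m'-k)) * catalan k
          = ((n+1+m'-1).choose m' : ℤ) := ihm
      have : (∑ k ∈ range (m'+1), (-1:ℤ)^k * ((n+(m'+1)+k).choose (m'+1-k)) * catalan k)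
          + (-1:ℤ)^(m'+1) * ((n+(m'+1)+(m'+1)).choose (m'+1-(m'+1))) * catalan (m'+1)
          = ((n+(m'+1)-1).choose (m'+1) : ℤ) := houter
      rw [add_right_comm, this, hinner]
      rw [show n+(m'+1)-1 = n + m' by omega, show n+1+m'-1 = n+m' by omega,
        show n+1+(m'+1)-1 = (n+m')+1 by omega]
      rw [Nat.choose_succ_succ]
      push_cast
      ring

theorem catalan_partial_sum (l m : ℕ) (hm : 1 ≤ m) (hl : 2 * m ≤ l) :
    ∑ k ∈ Finset.range m,
      (-1 : ℤ) ^ k * (l - m + k).choose (m - k) * catalan k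
    = ((l - m - 1).choose m : ℤ) - (-1 : ℤ) ^ m * catalan m := by
  set n := l - 2*m with hn
  have h := full_sum n m
  rw [Finset.sum_range_succ] at h
  have hrw : ∀ k, l - m + k = n + m + k := by intro k; omega
  have hrw2 : l - m - 1 = n + m - 1 := by omega
  simp only [hrw, hrw2]
  rw [Nat.sub_self, Nat.choose_zero_right] at h
  push_cast at h ⊢
  linarith [h]
end
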